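/- arXiv:1301.2021 — 2 statements merged into one kernel-verified Lean document; each statement's English description precedes it below -/
import Mathlib

section
/- Under the root-unitary setup, E(z^X) ≤ exp(n(z-1) + σ²(z-1)²/2) for all real z, where σ² is the variance of X. -/
/-! Each factor of the generating function equals `1 + y` with
`y = (z - 1) + (z - 1) ^ 2 / (2 (1 - cos φ))` and is nonnegative, being `|z - e^{iφ}|² / (2 (1 - cos φ))`;
so `1 + y ≤ exp y` bounds the product by the exponential of the sum of the `y`'s. -/

open Real Finset

theorem Real.prod_one_add_le_exp_sum_of_one_add_nonneg {ι : Type*} (s : Finset ι) {f : ι → ℝ}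
    (hf : ∀ i ∈ s, 0 ≤ 1 + f i) : ∏ i ∈ s, (1 + f i) ≤ exp (∑ i ∈ s, f i) :=
  (prod_le_prod hf fun i _ ↦ (add_comm 1 (f i)).le.trans (add_one_le_exp _)).trans
    (exp_sum s f).symm.le

theorem Real.cos_lt_one_of_mem_Ioo {x : ℝ} (hx : x ∈ Set.Ioo 0 (2 * π)) : cos x < 1 :=
  (cos_le_one x).lt_of_ne fun h ↦
    hx.1.ne' ((cos_eq_one_iff_of_lt_of_lt (by linarith [pi_pos, hx.1]) hx.2).1 h)

theorem Real.one_sub_two_mul_mul_cos_add_sq_nonneg (x z : ℝ) : 0 ≤ 1 - 2 * z * cos x + z ^ 2 := by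
  nlinarith [sin_sq_add_cos_sq x, sq_nonneg (z - cos x), sq_nonneg (sin x)]

theorem Real.one_sub_two_mul_mul_cos_add_sq_div_eq {x : ℝ} (hx : cos x < 1) (z : ℝ) :
    (1 - 2 * z * cos x + z ^ 2) / (2 * (1 - cos x)) =
      1 + ((z - 1) + 1 / (1 - cos x) * (z - 1) ^ 2 / 2) := by
  have : 1 - cos x ≠ 0 := by linarith
  field_simp
  ring

theorem stmt11_general (n : ℕ)
    (φ : Fin n → ℝ) (hφ : ∀ j, φ j ∈ Set.Ioo 0 (2 * Real.pi))
    (w : ℕ → ℝ)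
    (hpgf : ∀ z : ℝ,
      ∑ k ∈ Finset.range (2 * n + 1), w k * z ^ k =
        ∏ j : Fin n, (1 - 2 * z * Real.cos (φ j) + z ^ 2) / (2 * (1 - Real.cos (φ j)))) :
    ∀ z : ℝ,
      ∑ k ∈ Finset.range (2 * n + 1), w k * z ^ k ≤
        Real.exp ((n : ℝ) * (z - 1) +
          (∑ j : Fin n, 1 / (1 - Real.cos (φ j))) * (z - 1) ^ 2 / 2) := by
  intro z
  have hfactor j := one_sub_two_mul_mul_cos_add_sq_div_eq (cos_lt_one_of_mem_Ioo (hφ j)) z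
  have hnonneg (j : Fin n) : 0 ≤ (1 - 2 * z * cos (φ j) + z ^ 2) / (2 * (1 - cos (φ j))) :=
    div_nonneg (one_sub_two_mul_mul_cos_add_sq_nonneg _ z)
      (by linarith [cos_lt_one_of_mem_Ioo (hφ j)])
  rw [hpgf z, prod_congr rfl fun j _ ↦ hfactor j]
  refine (prod_one_add_le_exp_sum_of_one_add_nonneg _ fun j _ ↦ hfactor j ▸ hnonneg j).trans_eq ?_
  rw [sum_add_distrib, sum_const, card_univ, Fintype.card_fin, ← sum_div, ← sum_mul, nsmul_eq_mul]

theorem stmt11 (n : ℕ)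
    (φ : Fin n → ℝ) (hφ : ∀ j, φ j ∈ Set.Ioo 0 (2 * Real.pi))
    (w : ℕ → ℝ) (hw : ∀ k, 0 ≤ w k)
    (hsupp : ∀ k, 2 * n < k → w k = 0)
    (hpgf : ∀ z : ℝ,
      ∑ k ∈ Finset.range (2 * n + 1), w k * z ^ k =
        ∏ j : Fin n, (1 - 2 * z * Real.cos (φ j) + z ^ 2) / (2 * (1 - Real.cos (φ j)))) :
    ∀ z : ℝ,
      ∑ k ∈ Finset.range (2 * n + 1), w k * z ^ k ≤
        Real.exp ((n : ℝ) * (z - 1) +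
          (∑ j : Fin n, 1 / (1 - Real.cos (φ j))) * (z - 1) ^ 2 / 2) :=
  stmt11_general n φ hφ w hpgf
end

section
/- For the Turán–Fejér random variable Z_{n,k}, the m-th moment is E(Z_{n,k}^m) = ∑_{ℓ=0}^m S(m,ℓ) ℓ! C(k+ℓ, k) C(n+k+1, 2k+ℓ+1) / C(n+k+1, 2k+1), where S(m,ℓ) are Stirling numbers of the second kind. -/
/-!
Writing `j ^ m = ∑ₗ S(m, l) · l! · C(j, l)` turns the `m`-th moment into a combination of the
factorial moments `E C(Z, l)`. Since `C(j, l) C(j + k, k) = C(k + l, k) C(j + k, k + l)`, each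
factorial moment is `C(k + l, k)` times a sum `∑ⱼ C(j + k, k + l) C(n - j, k)`, which the upper
Chu–Vandermonde identity evaluates to `C(n + k + 1, 2k + l + 1)`.
-/

/-- Stirling numbers of the second kind. -/
def stirling2 : ℕ → ℕ → ℕ
  | 0, 0 => 1
  | 0, _ + 1 => 0
  | _ + 1, 0 => 0
  | m + 1, l + 1 => (l + 1) * stirling2 m (l + 1) + stirling2 m l

open Finset Polynomial

theorem stirling2_eq_stirlingSecond : stirling2 = Nat.stirlingSecond := by
  funext m l
  induction m generalizing l with
  | zero => cases l <;> rfl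
  | succ m ih => cases l <;> simp [stirling2, Nat.stirlingSecond_succ_succ, ih]

theorem Polynomial.X_pow_eq_sum_stirlingSecond_mul_descPochhammer (R : Type*) [CommRing R]
    (m : ℕ) :
    (X : R[X]) ^ m =
      ∑ l ∈ range (m + 1), (Nat.stirlingSecond m l : R[X]) * descPochhammer R l := by
  induction m with
  | zero => simp
  | succ m ih =>
    have descPochhammer_mul_X (l : ℕ) :
        descPochhammer R l * X = descPochhammer R (l + 1) + (l : R[X]) * descPochhammer R l := by
      rw [descPochhammer_succ_right]; ring
    rw [pow_succ, ih, sum_mul]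
    simp_rw [mul_assoc, descPochhammer_mul_X, mul_add, sum_add_distrib]
    have shift : ∑ l ∈ range (m + 1), (Nat.stirlingSecond m l : R[X]) * (l * descPochhammer R l) =
        ∑ l ∈ range (m + 1),
          ((l + 1 : ℕ) * Nat.stirlingSecond m (l + 1) : R[X]) * descPochhammer R (l + 1) := by
      rw [sum_range_succ', sum_range_succ _ m, Nat.stirlingSecond_eq_zero_of_lt m.lt_succ_self]
      simp only [Nat.cast_add, Nat.cast_one, Nat.cast_zero, zero_mul, mul_zero, add_zero]
      exact sum_congr rfl fun l _ => by ring
    rw [shift, ← sum_add_distrib, sum_range_succ' _ (m + 1)]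
    simp only [Nat.stirlingSecond_succ_succ, Nat.stirlingSecond_succ_zero, Nat.cast_zero,
      zero_mul, add_zero]
    exact sum_congr rfl fun l _ => by push_cast; ring

theorem Nat.pow_eq_sum_stirlingSecond_mul_descFactorial (x m : ℕ) :
    x ^ m = ∑ l ∈ range (m + 1), Nat.stirlingSecond m l * x.descFactorial l := by
  have h := congrArg (eval (x : ℤ)) (X_pow_eq_sum_stirlingSecond_mul_descPochhammer ℤ m)
  simp only [eval_pow, eval_X, eval_finsetSum, eval_mul, eval_natCast,
    descPochhammer_eval_eq_descFactorial] at h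
  exact_mod_cast h

/- Compare coefficients of `X ^ N` in `(1 - X)⁻¹ ^ (a + 1) * (1 - X)⁻¹ ^ (b + 1)`
and `(1 - X)⁻¹ ^ (a + b + 2)`. -/
theorem Nat.sum_antidiagonal_add_choose_mul_add_choose (a b N : ℕ) :
    ∑ ij ∈ antidiagonal N, (a + ij.1).choose a * (b + ij.2).choose b =
      (a + b + 1 + N).choose (a + b + 1) := by
  have h := congrArg (PowerSeries.coeff N)
    (pow_add (PowerSeries.mk 1 : PowerSeries ℤ) (a + 1) (b + 1))
  rw [show a + 1 + (b + 1) = a + b + 1 + 1 by ring] at h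
  simp only [PowerSeries.mk_one_pow_eq_mk_choose_add, PowerSeries.coeff_mul,
    PowerSeries.coeff_mk] at h
  exact_mod_cast h.symm

theorem Nat.choose_mul_add_choose (j k l : ℕ) :
    j.choose l * (j + k).choose k = (k + l).choose k * (j + k).choose (k + l) := by
  rcases le_or_gt l j with hlj | hjl
  · have h₁ := Nat.choose_mul (n := j + k) (Nat.le_add_left l k)
    have h₂ := Nat.choose_mul (n := j + k) hlj
    rw [Nat.choose_symm_of_eq_add (show k + l = l + k by omega), Nat.add_sub_cancel] at h₁
    rw [Nat.choose_symm_of_eq_add (show j + k - l = (j - l) + k by omega),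
      Nat.choose_symm_add] at h₂
    rw [mul_comm, h₂, ← h₁, mul_comm]
  · rw [Nat.choose_eq_zero_of_lt hjl, Nat.choose_eq_zero_of_lt (by omega : j + k < k + l),
      zero_mul, mul_zero]

theorem Nat.sum_range_add_choose_mul_sub_choose (n k l : ℕ) :
    ∑ j ∈ range (n - k + 1), (j + k).choose (k + l) * (n - j).choose k =
      (n + k + 1).choose (2 * k + l + 1) := by
  rcases le_or_gt (k + l) n with hkl | hkl
  · obtain ⟨N, rfl⟩ := Nat.exists_eq_add_of_le' hkl
    rw [show N + (k + l) - k + 1 = l + (N + 1) by omega, sum_range_add,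
      sum_eq_zero fun j hj => by
        rw [Nat.choose_eq_zero_of_lt (by simp at hj; omega), zero_mul],
      zero_add]
    have vandermonde := Nat.sum_antidiagonal_add_choose_mul_add_choose (k + l) k N
    rw [Nat.sum_antidiagonal_eq_sum_range_succ
      (fun i j => (k + l + i).choose (k + l) * (k + j).choose k)] at vandermonde
    rw [show N + (k + l) + k + 1 = k + l + k + 1 + N by omega,
      show 2 * k + l + 1 = k + l + k + 1 by omega, ← vandermonde]
    refine sum_congr rfl fun i hi => ?_
    simp only [mem_range] at hi
    congr 2 <;> omega
  · rw [sum_eq_zero fun j hj => ?_, Nat.choose_eq_zero_of_lt (by omega)]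
    simp only [mem_range] at hj
    rcases le_or_gt k n with hkn | hnk
    · rw [Nat.choose_eq_zero_of_lt (by omega : j + k < k + l), zero_mul]
    · rw [Nat.choose_eq_zero_of_lt (by omega : n - j < k), mul_zero]

/-- `C(n + k + 1, 2k + 1) · P(Z_{n,k} = j)`. -/
def turanFejerWeight (n k j : ℕ) : ℕ := (j + k).choose k * (n - j).choose k

theorem sum_choose_mul_turanFejerWeight (n k l : ℕ) :
    ∑ j ∈ range (n - k + 1), j.choose l * turanFejerWeight n k j =
      (k + l).choose k * (n + k + 1).choose (2 * k + l + 1) := by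
  simp only [turanFejerWeight, ← mul_assoc, Nat.choose_mul_add_choose]
  rw [← Nat.sum_range_add_choose_mul_sub_choose, mul_sum]
  simp only [mul_assoc]

theorem sum_pow_mul_turanFejerWeight (n k m : ℕ) :
    ∑ j ∈ range (n - k + 1), j ^ m * turanFejerWeight n k j =
      ∑ l ∈ range (m + 1), Nat.stirlingSecond m l * l.factorial * (k + l).choose k *
        (n + k + 1).choose (2 * k + l + 1) := by
  simp_rw [Nat.pow_eq_sum_stirlingSecond_mul_descFactorial _ m, sum_mul]
  rw [sum_comm]
  refine sum_congr rfl fun l _ => ?_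
  rw [mul_assoc _ ((k + l).choose k), ← sum_choose_mul_turanFejerWeight, mul_sum]
  refine sum_congr rfl fun j _ => ?_
  rw [Nat.descFactorial_eq_factorial_mul_choose]
  ring

theorem stmt17_general (n k m : ℕ) :
    (∑ j ∈ Finset.range (n - k + 1),
        (j : ℝ) ^ m * ((j + k).choose k * (n - j).choose k : ℕ)
          / ((n + k + 1).choose (2 * k + 1) : ℕ)) =
      ∑ l ∈ Finset.range (m + 1),
        (stirling2 m l : ℝ) * (l.factorial : ℝ) *
          ((k + l).choose k : ℕ) * ((n + k + 1).choose (2 * k + l + 1) : ℕ)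
          / ((n + k + 1).choose (2 * k + 1) : ℕ) := by
  rw [← sum_div, ← sum_div, stirling2_eq_stirlingSecond]
  congr 1
  exact_mod_cast sum_pow_mul_turanFejerWeight n k m

theorem stmt17 (n k m : ℕ) (hkn : k ≤ n) :
    (∑ j ∈ Finset.range (n - k + 1),
        (j : ℝ) ^ m * ((j + k).choose k * (n - j).choose k : ℕ)
          / ((n + k + 1).choose (2 * k + 1) : ℕ)) =
      ∑ l ∈ Finset.range (m + 1),
        (stirling2 m l : ℝ) * (l.factorial : ℝ) *
          ((k + l).choose k : ℕ) * ((n + k + 1).choose (2 * k + l + 1) : ℕ)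
          / ((n + k + 1).choose (2 * k + 1) : ℕ) :=
  stmt17_general n k m
end
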